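/- In Priest's 3-valued logic P3 over a finite nonempty set of atoms (truth values F < U < T, strong Kleene semantics for ¬, ∧, ∨, and a valuation v satisfies φ iff v(φ) ∈ {U, T}), the empty set of models is not finitely representable: the valuation assigning U to every atom satisfies every propositional formula, hence every finite base has a model. Consequently the satisfaction system of P3 (which has finitely many models and hence finite FRsets) is not eviction-compatible. -/

import Mathlib

variable {α β : Type*}

def ModelsOf (sat : β → Set α → Prop) (B : Set α) : Set β := {m | sat m B}

def FRsets (sat : β → Set α → Prop) : Set (Set β) :=
  {X | ∃ B : Set α, B.Finite ∧ ModelsOf sat B = X}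

def FRsubs (sat : β → Set α → Prop) (M : Set β) : Set (Set β) :=
  {X | X ∈ FRsets sat ∧ X ⊆ M ∧ ¬ ∃ Y ∈ FRsets sat, X ⊂ Y ∧ Y ⊆ M}

def FRsups (sat : β → Set α → Prop) (M : Set β) : Set (Set β) :=
  {X | X ∈ FRsets sat ∧ M ⊆ X ∧ ¬ ∃ Y ∈ FRsets sat, M ⊆ Y ∧ Y ⊂ X}

/-- The three truth values, ordered `F < U < T`. -/
inductive Tri : Type where
  | F : Tri
  | U : Tri
  | T : Tri
deriving DecidableEq

def Tri.toNat : Tri → ℕ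
  | .F => 0
  | .U => 1
  | .T => 2

def Tri.min (a b : Tri) : Tri := if a.toNat ≤ b.toNat then a else b
def Tri.max (a b : Tri) : Tri := if a.toNat ≤ b.toNat then b else a

inductive PropForm (P : Type*) : Type _ where
  | atom : P → PropForm P
  | neg : PropForm P → PropForm P
  | conj : PropForm P → PropForm P → PropForm P
  | disj : PropForm P → PropForm P → PropForm P

/-- Strong Kleene 3-valued evaluation. -/
def PropForm.eval3 {P : Type*} (v : P → Tri) : PropForm P → Tri
  | .atom p => v p
  | .neg φ =>
      match φ.eval3 v with
      | .F => .T
      | .U => .U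
      | .T => .F
  | .conj φ ψ => Tri.min (φ.eval3 v) (ψ.eval3 v)
  | .disj φ ψ => Tri.max (φ.eval3 v) (ψ.eval3 v)

/-- Priest'\''s P3 satisfaction: a valuation satisfies a base iff every formula
in it evaluates to `U` or `T` (i.e. not `F`). -/
def satP3 {P : Type*} (v : P → Tri) (B : Set (PropForm P)) : Prop :=
  ∀ φ ∈ B, φ.eval3 v ≠ Tri.F

/-
Every formula takes the value `U` under the constant valuation `U`, because the strong Kleene
connectives map `U`-arguments to `U`. That valuation therefore satisfies every base, so no finite
base has an empty set of models, and `∅` is not finitely representable. Evicting every model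
from the empty base leaves `∅`, whose only candidate maximal finitely representable subset is `∅`
itself, so eviction fails there.
-/

theorem PropForm.eval3_const_U {P : Type*} (φ : PropForm P) :
    φ.eval3 (fun _ => Tri.U) = Tri.U := by
  induction φ with
  | atom p => rfl
  | neg φ ih => simp [PropForm.eval3, ih]
  | conj φ ψ ih₁ ih₂ => simp [PropForm.eval3, ih₁, ih₂, Tri.min]
  | disj φ ψ ih₁ ih₂ => simp [PropForm.eval3, ih₁, ih₂, Tri.max]

theorem satP3_const_U {P : Type*} (B : Set (PropForm P)) : satP3 (fun _ => Tri.U) B :=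
  fun φ _ => by simp [φ.eval3_const_U]

theorem modelsOf_satP3_nonempty {P : Type*} (B : Set (PropForm P)) :
    (ModelsOf satP3 B).Nonempty :=
  ⟨fun _ => Tri.U, satP3_const_U B⟩

theorem empty_notMem_FRsets_of_modelsOf_nonempty {sat : β → Set α → Prop}
    (h : ∀ B : Set α, B.Finite → (ModelsOf sat B).Nonempty) : ∅ ∉ FRsets sat := by
  rintro ⟨B, hB, hempty⟩
  exact (h B hB).ne_empty hempty

theorem FRsubs_empty_nonempty_iff {sat : β → Set α → Prop} :
    (FRsubs sat ∅).Nonempty ↔ ∅ ∈ FRsets sat := by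
  constructor
  · rintro ⟨X, hX, hXsub, -⟩
    rwa [Set.subset_empty_iff.mp hXsub] at hX
  · intro h
    refine ⟨∅, h, subset_rfl, ?_⟩
    rintro ⟨Y, -, hssub, hsub⟩
    exact hssub.ne (Set.subset_empty_iff.mp hsub).symm

theorem stmt18_general (P : Type*) :
    (∀ φ : PropForm P, φ.eval3 (fun _ => Tri.U) ≠ Tri.F) ∧
    (∀ B : Set (PropForm P), B.Finite → (ModelsOf satP3 B).Nonempty) ∧
    ((∅ : Set (P → Tri)) ∉ FRsets (satP3 (P := P))) ∧
    ¬ (∀ (B : Set (PropForm P)) (M : Set (P → Tri)), B.Finite →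
        (FRsubs satP3 (ModelsOf satP3 B \ M)).Nonempty) := by
  have hempty : (∅ : Set (P → Tri)) ∉ FRsets (satP3 (P := P)) :=
    empty_notMem_FRsets_of_modelsOf_nonempty fun B _ => modelsOf_satP3_nonempty B
  refine ⟨fun φ => by simp [φ.eval3_const_U], fun B _ => modelsOf_satP3_nonempty B, hempty, ?_⟩
  intro hevict
  apply hempty
  rw [← FRsubs_empty_nonempty_iff]
  simpa using hevict ∅ Set.univ Set.finite_empty

theorem stmt18 (P : Type*) [Fintype P] [Nonempty P] :
    (∀ φ : PropForm P, φ.eval3 (fun _ => Tri.U) ≠ Tri.F) ∧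
    (∀ B : Set (PropForm P), B.Finite → (ModelsOf satP3 B).Nonempty) ∧
    ((∅ : Set (P → Tri)) ∉ FRsets (satP3 (P := P))) ∧
    ¬ (∀ (B : Set (PropForm P)) (M : Set (P → Tri)), B.Finite →
        (FRsubs satP3 (ModelsOf satP3 B \ M)).Nonempty) :=
  stmt18_general P
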